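/- Let β > 1. Then for every real x ≥ 1 the integral ∫_{−1}^{1} e^{−x·F_β(t)/2}·(1−t²)^{−1} dt is finite. -/

import Mathlib

/-!
With `u = artanh t` one has `F_β(t) = u² / β + log (1 - t²)` and `1 - t² = cosh⁻² u`, so
`-log (1 - t²) = 2 log cosh u ≤ 2 |u|`. Hence the integrand `exp (-x F_β(t) / 2 - log (1 - t²))`
is at most `exp (-(x / 2β) u² + (x + 2) |u|)`, which is bounded in `u`; a bounded measurable
function is integrable on the bounded interval `(-1, 1)`.
-/

open MeasureTheory

/-- The function `F_β`. -/
noncomputable def Fbeta (β t : ℝ) : ℝ :=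
  1 / β * (1 / 2 * Real.log ((1 + t) / (1 - t))) ^ 2 + Real.log (1 - t ^ 2)

open Real Set

lemma cosh_le_exp_abs (u : ℝ) : cosh u ≤ exp |u| := by
  rw [← cosh_abs, cosh_eq]
  have : exp (-|u|) ≤ exp |u| := exp_le_exp.2 (by linarith [abs_nonneg u])
  linarith

lemma log_cosh_le_abs (u : ℝ) : log (cosh u) ≤ |u| :=
  (log_le_iff_le_exp (cosh_pos u)).2 (cosh_le_exp_abs u)

lemma neg_mul_sq_add_mul_le {c : ℝ} (hc : 0 < c) (a u : ℝ) :
    -c * u ^ 2 + a * u ≤ a ^ 2 / (4 * c) := by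
  rw [le_div_iff₀ (by positivity)]
  nlinarith [sq_nonneg (2 * c * u - a)]

lemma one_sub_sq_pos {t : ℝ} (ht : t ∈ Ioo (-1) 1) : 0 < 1 - t ^ 2 := by
  nlinarith [ht.1, ht.2]

lemma log_one_sub_sq_eq_neg_two_mul_log_cosh_artanh {t : ℝ} (ht : t ∈ Ioo (-1) 1) :
    log (1 - t ^ 2) = -2 * log (cosh (artanh t)) := by
  rw [cosh_artanh ht, one_div, log_inv, log_sqrt (one_sub_sq_pos ht).le]
  ring

lemma Fbeta_eq_artanh (β : ℝ) {t : ℝ} (ht : t ∈ Ioo (-1) 1) :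
    Fbeta β t = artanh t ^ 2 / β + log (1 - t ^ 2) := by
  rw [Fbeta, ← artanh_eq_half_log (Ioo_subset_Icc_self ht)]
  ring

@[fun_prop]
lemma measurable_Fbeta (β : ℝ) : Measurable (Fbeta β) := by
  unfold Fbeta
  fun_prop

lemma exp_Fbeta_div_one_sub_sq_le {β x t : ℝ} (hβ : 0 < β) (hx : 0 < x) (ht : t ∈ Ioo (-1) 1) :
    exp (-(x * Fbeta β t) / 2) / (1 - t ^ 2) ≤ exp (β * (x + 2) ^ 2 / (2 * x)) := by
  set u := artanh t
  have h : 0 < 1 - t ^ 2 := one_sub_sq_pos ht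
  have hlog : -log (1 - t ^ 2) ≤ 2 * |u| := by
    rw [log_one_sub_sq_eq_neg_two_mul_log_cosh_artanh ht]
    linarith [log_cosh_le_abs u]
  calc exp (-(x * Fbeta β t) / 2) / (1 - t ^ 2)
      = exp (-(x / (2 * β)) * |u| ^ 2 + (x / 2 + 1) * -log (1 - t ^ 2)) := by
        rw [← exp_log h, ← exp_sub, exp_log h, Fbeta_eq_artanh β ht, sq_abs]
        congr 1
        field_simp
        ring
    _ ≤ exp (-(x / (2 * β)) * |u| ^ 2 + (x + 2) * |u|) := by
        gcongr exp ?_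
        nlinarith
    _ ≤ exp (β * (x + 2) ^ 2 / (2 * x)) := by
        gcongr exp ?_
        refine (neg_mul_sq_add_mul_le (by positivity) _ |u|).trans_eq ?_
        field_simp
        ring

/-- For `β > 1` and every real `x ≥ 1` the integral
`∫_{-1}^1 e^{-x F_β(t)/2} (1-t²)^{-1} dt` is finite. -/
theorem Fbeta_density_integrable (β : ℝ) (hβ : 1 < β) (x : ℝ) (hx : 1 ≤ x) :
    IntegrableOn (fun t : ℝ => Real.exp (-(x * Fbeta β t) / 2) / (1 - t ^ 2))
      (Set.Ioo (-1 : ℝ) 1) := by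
  refine Measure.integrableOn_of_bounded (M := exp (β * (x + 2) ^ 2 / (2 * x)))
    measure_Ioo_lt_top.ne (Measurable.aestronglyMeasurable (by fun_prop)) ?_
  filter_upwards [ae_restrict_mem measurableSet_Ioo] with t ht
  rw [norm_of_nonneg (div_nonneg (exp_nonneg _) (one_sub_sq_pos ht).le)]
  exact exp_Fbeta_div_one_sub_sq_le (by linarith) (by linarith) ht
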